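/- For 0 < q < 1, the Marčenko–Pastur density integrates to 1 over its support [λ_−, λ_+]: ∫_{λ_−}^{λ_+} √((λ_+ − λ)(λ − λ_−))/(2πqλ) dλ = 1. -/

import Mathlib

/-!
Write `Q = (b - x)(x - a)` and `√Q / x = Q / (x √Q)`. Dividing `Q` by `x` leaves
`a + b - x - ab / x`: `(a + b - x) / √Q` integrates to `√Q` plus a multiple of
`arcsin ((2x - a - b) / (b - a))`, and `ab / (x √Q)` becomes, after `x ↦ 1 / x`, the derivative
of a second arcsine. Both arcsines run from `-π/2` to `π/2` over `[a, b]`, so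
`∫ₐᵇ √Q / x = π ((a + b) / 2 - √(ab))`. For `a, b = (1 ∓ √q)²` this is
`π ((1 + q) - (1 - q)) = 2πq`.
-/

open Real Set intervalIntegral

lemma HasDerivAt.arcsin_of_one_sub_sq_eq_sq {f : ℝ → ℝ} {f' w x : ℝ} (hf : HasDerivAt f f' x)
    (hw : 0 < w) (hsq : 1 - f x ^ 2 = w ^ 2) :
    HasDerivAt (fun y => arcsin (f y)) (f' / w) x := by
  have hpos : 0 < 1 - f x ^ 2 := hsq ▸ by positivity
  have hne_neg : f x ≠ -1 := by rintro h; simp [h] at hpos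
  have hne_one : f x ≠ 1 := by rintro h; simp [h] at hpos
  refine ((hasDerivAt_arcsin hne_neg hne_one).comp x hf).congr_deriv ?_
  rw [hsq, sqrt_sq hw.le]
  ring

noncomputable def sqrtQuadDivPrimitive (a b x : ℝ) : ℝ :=
  √((b - x) * (x - a)) + (a + b) / 2 * arcsin ((2 * x - a - b) / (b - a))
    - √(a * b) * arcsin (((a + b) * x - 2 * (a * b)) / ((b - a) * x))

section

variable {a b : ℝ}

lemma continuousOn_sqrtQuadDivPrimitive (ha : 0 < a) (hab : a < b) :
    ContinuousOn (sqrtQuadDivPrimitive a b) (Icc a b) := by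
  unfold sqrtQuadDivPrimitive
  refine ContinuousOn.sub (by fun_prop) (continuousOn_const.mul ?_)
  refine continuous_arcsin.comp_continuousOn (ContinuousOn.div (by fun_prop) (by fun_prop) ?_)
  exact fun x hx => mul_ne_zero (sub_ne_zero.mpr hab.ne') (ha.trans_le hx.1).ne'

lemma hasDerivAt_sqrtQuadDivPrimitive (ha : 0 < a) {x : ℝ} (hx : x ∈ Ioo a b) :
    HasDerivAt (sqrtQuadDivPrimitive a b) (√((b - x) * (x - a)) / x) x := by
  obtain ⟨hax, hxb⟩ := hx
  have hx0 : 0 < x := ha.trans hax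
  have hba : 0 < b - a := by linarith
  have hQ : 0 < (b - x) * (x - a) := mul_pos (by linarith) (by linarith)
  set S := √((b - x) * (x - a))
  have hS0 : 0 < S := sqrt_pos.mpr hQ
  have hS2 : S ^ 2 = (b - x) * (x - a) := sq_sqrt hQ.le
  set T := √(a * b)
  have hT0 : 0 < T := sqrt_pos.mpr (mul_pos ha (by linarith))
  have hT2 : T ^ 2 = a * b := sq_sqrt (mul_pos ha (by linarith)).le
  have hQ' : HasDerivAt (fun y => (b - y) * (y - a)) (a + b - 2 * x) x :=
    (((hasDerivAt_id x).const_sub b).mul ((hasDerivAt_id x).sub_const a)).congr_deriv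
      (by simp; ring)
  have hu : HasDerivAt (fun y => (2 * y - a - b) / (b - a)) (2 / (b - a)) x :=
    (((((hasDerivAt_id x).const_mul 2).sub_const a).sub_const b).div_const (b - a)).congr_deriv
      (by simp)
  have hv : HasDerivAt (fun y => ((a + b) * y - 2 * (a * b)) / ((b - a) * y))
      (2 * (a * b) / ((b - a) * x ^ 2)) x :=
    ((((hasDerivAt_id x).const_mul (a + b)).sub_const (2 * (a * b))).div
      ((hasDerivAt_id x).const_mul (b - a)) (mul_ne_zero hba.ne' hx0.ne')).congr_deriv
      (by simp; field_simp; ring)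
  have hsqrt : HasDerivAt (fun y => √((b - y) * (y - a))) ((a + b - 2 * x) / (2 * S)) x :=
    hQ'.sqrt hQ.ne'
  have harcsin_u := hu.arcsin_of_one_sub_sq_eq_sq (w := 2 * S / (b - a)) (by positivity)
    (by field_simp; linear_combination (-4 : ℝ) * hS2)
  have harcsin_v := hv.arcsin_of_one_sub_sq_eq_sq (w := 2 * T * S / ((b - a) * x))
    (by positivity)
    (by field_simp; linear_combination (-4 * S ^ 2) * hT2 + (-4 * (a * b)) * hS2)
  refine ((hsqrt.add (harcsin_u.const_mul ((a + b) / 2))).sub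
    (harcsin_v.const_mul T)).congr_deriv ?_
  field_simp
  linear_combination (-2) * hS2

lemma sqrtQuadDivPrimitive_right (hb : 0 < b) (hab : a < b) :
    sqrtQuadDivPrimitive a b b = (a + b) / 2 * (π / 2) - √(a * b) * (π / 2) := by
  have hba : b - a ≠ 0 := sub_ne_zero.mpr hab.ne'
  have hu : (2 * b - a - b) / (b - a) = 1 := by field_simp; ring
  have hv : ((a + b) * b - 2 * (a * b)) / ((b - a) * b) = 1 := by field_simp; ring
  simp [sqrtQuadDivPrimitive, hu, hv, arcsin_one]

lemma sqrtQuadDivPrimitive_left (ha : 0 < a) (hab : a < b) :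
    sqrtQuadDivPrimitive a b a = -((a + b) / 2 * (π / 2)) + √(a * b) * (π / 2) := by
  have hba : b - a ≠ 0 := sub_ne_zero.mpr hab.ne'
  have hu : (2 * a - a - b) / (b - a) = -1 := by field_simp; ring
  have hv : ((a + b) * a - 2 * (a * b)) / ((b - a) * a) = -1 := by field_simp; ring
  simp [sqrtQuadDivPrimitive, hu, hv]

theorem integral_sqrt_mul_sub_div_self (ha : 0 < a) (hab : a < b) :
    ∫ x in a..b, √((b - x) * (x - a)) / x = π * ((a + b) / 2 - √(a * b)) := by
  have hintegrable :
      IntervalIntegrable (fun x => √((b - x) * (x - a)) / x) MeasureTheory.volume a b := by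
    refine ContinuousOn.intervalIntegrable (ContinuousOn.div (by fun_prop) (by fun_prop) ?_)
    intro x hx
    rw [uIcc_of_le hab.le] at hx
    exact (ha.trans_le hx.1).ne'
  rw [integral_eq_sub_of_hasDerivAt_of_le hab.le (continuousOn_sqrtQuadDivPrimitive ha hab)
    (fun x hx => hasDerivAt_sqrtQuadDivPrimitive ha hx) hintegrable,
    sqrtQuadDivPrimitive_right (ha.trans hab) hab, sqrtQuadDivPrimitive_left ha hab]
  ring

end

theorem mp_density_integrates_to_one (q : ℝ) (hq0 : 0 < q) (hq1 : q < 1) :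
    ∫ l in ((1 - Real.sqrt q) ^ 2)..((1 + Real.sqrt q) ^ 2),
      Real.sqrt (((1 + Real.sqrt q) ^ 2 - l) * (l - (1 - Real.sqrt q) ^ 2)) /
        (2 * Real.pi * q * l) = 1 := by
  have hs1 : √q < 1 := by simpa using sqrt_lt_sqrt hq0.le hq1
  have hs2 : √q ^ 2 = q := sq_sqrt hq0.le
  have hleft : 0 < (1 - √q) ^ 2 := pow_pos (sub_pos.mpr hs1) 2
  have hlt : (1 - √q) ^ 2 < (1 + √q) ^ 2 := by nlinarith [sqrt_pos.mpr hq0]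
  have hmean : ((1 - √q) ^ 2 + (1 + √q) ^ 2) / 2 = 1 + q := by linear_combination hs2
  have hgeom : √((1 - √q) ^ 2 * (1 + √q) ^ 2) = 1 - q := by
    rw [← mul_pow, sqrt_sq (mul_nonneg (sub_nonneg.mpr hs1.le) (by positivity))]
    linear_combination -hs2
  simp_rw [div_mul_eq_div_div_swap (b := 2 * π * q)]
  rw [intervalIntegral.integral_div, integral_sqrt_mul_sub_div_self hleft hlt, hmean, hgeom]
  field_simp
  ring
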